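/- Let {X_j} be a system of smooth complex vector fields on ℝⁿ closed under conjugation up to the following device: if for every ε > 0 there is C_ε with ‖u‖²_δ ≤ Σ_j (C_ε‖L_j u‖² + ε‖L̄_j u‖²) + C_ε‖u‖² (from Hörmander's theorem applied to {L_j, εL̄_j}), and if moreover each ‖L̄_j u‖² ≲ ‖L_j u‖² + |([L_j, L̄_j]u, u)| + ‖u‖² ≲ ‖L_j u‖² + ‖u‖²_{1/2} + ‖u‖², then in the case of bracket type 2 (hence δ = 1/2) the term ε‖u‖²_{1/2} can be absorbed, yielding the subelliptic estimate ‖u‖²_{1/2} ≲ Σ_j ‖L_j u‖² + ‖u‖² for the system {L_j} alone. -/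

import Mathlib

open MeasureTheory Complex

noncomputable section

/-- Fourier transform on ℝⁿ. -/
def FE (n : ℕ) (u : EuclideanSpace ℝ (Fin n) → ℂ) : EuclideanSpace ℝ (Fin n) → ℂ :=
  fun ξ => ∫ x : EuclideanSpace ℝ (Fin n),
    Complex.exp (-Complex.I * ((2 * Real.pi * (inner ℝ x ξ : ℝ) : ℝ) : ℂ)) * u x

/-- Squared Sobolev norm of order s on ℝⁿ. -/
def sobSq (n : ℕ) (s : ℝ) (u : EuclideanSpace ℝ (Fin n) → ℂ) : ℝ :=
  ∫ ξ : EuclideanSpace ℝ (Fin n), (1 + ‖ξ‖ ^ 2) ^ s * ‖FE n u ξ‖ ^ 2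

/-- Squared L² norm on ℝⁿ. -/
def l2Sq (n : ℕ) (u : EuclideanSpace ℝ (Fin n) → ℂ) : ℝ :=
  ∫ x : EuclideanSpace ℝ (Fin n), ‖u x‖ ^ 2

/-- A complex vector field with coefficients a j ·: L_j u = Σ_i a j i · ∂_i u. -/
def Lsys (n N : ℕ) (a : Fin N → Fin n → EuclideanSpace ℝ (Fin n) → ℂ) (j : Fin N)
    (u : EuclideanSpace ℝ (Fin n) → ℂ) : EuclideanSpace ℝ (Fin n) → ℂ :=
  fun x => ∑ i, a j i x * fderiv ℝ u x (EuclideanSpace.single i 1)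

/-- The conjugate vector field L̄_j. -/
def Lbarsys (n N : ℕ) (a : Fin N → Fin n → EuclideanSpace ℝ (Fin n) → ℂ) (j : Fin N)
    (u : EuclideanSpace ℝ (Fin n) → ℂ) : EuclideanSpace ℝ (Fin n) → ℂ :=
  fun x => ∑ i, (starRingEnd ℂ) (a j i x) * fderiv ℝ u x (EuclideanSpace.single i 1)

lemma l2Sq_nonneg' (n : ℕ) (u : EuclideanSpace ℝ (Fin n) → ℂ) : 0 ≤ l2Sq n u :=
  integral_nonneg fun x => by positivity

lemma sobSq_nonneg' (n : ℕ) (s : ℝ) (u : EuclideanSpace ℝ (Fin n) → ℂ) : 0 ≤ sobSq n s u :=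
  integral_nonneg fun ξ => by positivity

def SmoothCptE (n : ℕ) (u : EuclideanSpace ℝ (Fin n) → ℂ) : Prop :=
  ContDiff ℝ (⊤ : ℕ∞) u ∧ HasCompactSupport u

/-- in the bracket type 2 case (δ = 1/2), the ε‖L̄_j u‖² terms in the
Hörmander estimate for {L_j, εL̄_j} can be absorbed, giving the subelliptic estimate
‖u‖²_{1/2} ≲ Σ_j ‖L_j u‖² + ‖u‖² for the system {L_j} alone. -/
theorem absorption_type_two (n N : ℕ)
    (a : Fin N → Fin n → EuclideanSpace ℝ (Fin n) → ℂ)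
    (ha : ∀ j i, ContDiff ℝ (⊤ : ℕ∞) (a j i))
    (h1 : ∀ ε : ℝ, 0 < ε → ∃ C : ℝ, ∀ u, SmoothCptE n u →
      sobSq n (1 / 2) u ≤
        (∑ j, (C * l2Sq n (Lsys n N a j u) + ε * l2Sq n (Lbarsys n N a j u))) +
        C * l2Sq n u)
    (h2 : ∃ C : ℝ, ∀ (j : Fin N) (u), SmoothCptE n u →
      l2Sq n (Lbarsys n N a j u) ≤
        C * (l2Sq n (Lsys n N a j u) + sobSq n (1 / 2) u + l2Sq n u)) :
    ∃ C : ℝ, ∀ u, SmoothCptE n u →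
      sobSq n (1 / 2) u ≤ C * ((∑ j, l2Sq n (Lsys n N a j u)) + l2Sq n u) := by
  obtain ⟨C2, hC2⟩ := h2
  set D : ℝ := max C2 0 with hDdef
  have hD0 : 0 ≤ D := le_max_right _ _
  set ε : ℝ := 1 / (2 * ((N : ℝ) + 1) * (D + 1)) with hεdef
  have hε : (0 : ℝ) < ε := by positivity
  obtain ⟨C1, hC1⟩ := h1 ε hε
  set E : ℝ := max C1 0 with hEdef
  have hE0 : 0 ≤ E := le_max_right _ _
  have hC1E : C1 ≤ E := le_max_left _ _
  have hεid : ε * (2 * ((N : ℝ) + 1) * (D + 1)) = 1 := by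
    rw [hεdef]; field_simp
  have hN0 : (0 : ℝ) ≤ (N : ℝ) := Nat.cast_nonneg _
  have h6 : (N : ℝ) * ε * D ≤ 1 / 2 := by nlinarith [mul_nonneg hN0 hD0]
  have h7 : ε * D ≤ 1 / 2 := by nlinarith
  refine ⟨2 * (E + 1), fun u hu => ?_⟩
  have hsob := sobSq_nonneg' n (1 / 2) u
  have hl2 := l2Sq_nonneg' n u
  have hLsum : 0 ≤ ∑ j, l2Sq n (Lsys n N a j u) :=
    Finset.sum_nonneg fun j _ => l2Sq_nonneg' _ _
  have h3 : sobSq n (1 / 2) u ≤ (E + ε * D) * (∑ j, l2Sq n (Lsys n N a j u))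
      + (N : ℝ) * ε * D * sobSq n (1 / 2) u
      + ((N : ℝ) * ε * D + E) * l2Sq n u := by
    have h4 := hC1 u hu
    have h5 : (∑ j, (C1 * l2Sq n (Lsys n N a j u) + ε * l2Sq n (Lbarsys n N a j u)))
        ≤ ∑ j, (E * l2Sq n (Lsys n N a j u)
            + ε * D * (l2Sq n (Lsys n N a j u) + sobSq n (1 / 2) u + l2Sq n u)) := by
      refine Finset.sum_le_sum fun j _ => ?_
      have hb := hC2 j u hu
      have hL := l2Sq_nonneg' n (Lsys n N a j u)
      have hnn : 0 ≤ l2Sq n (Lsys n N a j u) + sobSq n (1 / 2) u + l2Sq n u := by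
        linarith
      have hb' : l2Sq n (Lbarsys n N a j u)
          ≤ D * (l2Sq n (Lsys n N a j u) + sobSq n (1 / 2) u + l2Sq n u) :=
        le_trans hb (mul_le_mul_of_nonneg_right (le_max_left _ _) hnn)
      nlinarith [mul_nonneg hL (sub_nonneg.mpr hC1E)]
    have h8 : (∑ j, (E * l2Sq n (Lsys n N a j u)
            + ε * D * (l2Sq n (Lsys n N a j u) + sobSq n (1 / 2) u + l2Sq n u)))
        = (E + ε * D) * (∑ j, l2Sq n (Lsys n N a j u))
          + (N : ℝ) * ε * D * sobSq n (1 / 2) u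
          + (N : ℝ) * ε * D * l2Sq n u := by
      simp only [Finset.sum_add_distrib, mul_add, ← Finset.mul_sum, Finset.sum_const,
        Finset.card_univ, Fintype.card_fin, nsmul_eq_mul]
      ring
    have h9 : C1 * l2Sq n u ≤ E * l2Sq n u :=
      mul_le_mul_of_nonneg_right hC1E hl2
    rw [h8] at h5
    linarith
  have hεD0 : 0 ≤ ε * D := mul_nonneg hε.le hD0
  nlinarith [mul_nonneg hE0 hLsum, mul_nonneg hE0 hl2, mul_nonneg hεD0 hLsum]
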